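/- arXiv:1906.04640 — 5 statements merged into one kernel-verified Lean document; each statement's English description precedes it below -/
import Mathlib

section
/- Let f : ℝ → ℝ be the lift of a circle endomorphism with two turns, with turning data z₀ < y₀ < z₀ + 1, and let J = [w₀, z₀+1] be its efficient climbing interval. Then there exist a point ỹ₀ ∈ J and a sequence (ỹ_{−k})_{k≥0} with ỹ_{−0} = ỹ₀, f(ỹ_{−(k+1)}) = ỹ_{−k} for all k ≥ 0, and ỹ_{−k} ∈ ⋃_{m∈ℤ} (J + m) for all k ≥ 0, such that the forward rotation number of ỹ₀ and its backward rotation number along this sequence both exist and equal sup ρ(f); that is, lim_{n→∞} (fⁿ(ỹ₀) − ỹ₀)/n = lim_{n→∞} (ỹ₀ − ỹ_{−n})/n = sup ρ(f). -/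
open Filter Topology

/-- A degree-one lift: a continuous map `f : ℝ → ℝ` with `f (x+1) = f x + 1`. -/
def IsDegreeOneLift (f : ℝ → ℝ) : Prop :=
  Continuous f ∧ ∀ x : ℝ, f (x + 1) = f x + 1

/-- `f` is the lift of a circle endomorphism with two turns, with turning data
`z₀ < y₀ < z₀ + 1`: it is a degree-one lift, strictly antitone on `[z₀, y₀]` and
strictly monotone on `[y₀, z₀ + 1]`. -/
def IsTwoTurnsLift (f : ℝ → ℝ) (z₀ y₀ : ℝ) : Prop :=
  IsDegreeOneLift f ∧ z₀ < y₀ ∧ y₀ < z₀ + 1 ∧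
    StrictAntiOn f (Set.Icc z₀ y₀) ∧ StrictMonoOn f (Set.Icc y₀ (z₀ + 1))

/-- The rotation set `ρ(f) = { limsup (fⁿ(x) - x)/n : x ∈ ℝ }`. -/
noncomputable def rotationSet (f : ℝ → ℝ) : Set ℝ :=
  {r : ℝ | ∃ x : ℝ,
    Filter.limsup (fun n : ℕ => (f^[n] x - x) / (n : ℝ)) Filter.atTop = r}

/-! On the efficient climbing interval `J`, `f x` is the running maximum `sup_{t ≤ x} f t`, so
on `G = ⋃ₘ (J + m)` the map `f` agrees with its upper map `F x = sup_{t ≤ x} f t`, a monotone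
degree-one lift. As `f ≤ F` and `F` is monotone, every rotation number of `f` is at most the
translation number `τ(F)`. Since `f` maps `J` onto an interval of length one, every point has an
`f`-preimage in `G`; hence backward orbits can be chosen inside `G`, and Cantor's intersection
theorem gives a point of `J` whose whole forward orbit stays in `G`. Along both orbits `f = F`,
and `F`-orbits advance by `n τ(F)` up to an error less than one, so both rotation numbers equal
`τ(F) = sup ρ(f)`. -/

open Set Function
open scoped Pointwise

namespace CircleDeg1Lift

theorem abs_map_sub_sub_translationNumber_lt (F : CircleDeg1Lift) (x : ℝ) :
    |F x - x - F.translationNumber| < 1 := by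
  rw [abs_lt]
  constructor
  · linarith [F.translationNumber_le_ceil_sub x, Int.ceil_lt_add_one (F x - x)]
  · linarith [F.map_lt_add_translationNumber_add_one x]

theorem tendsto_pow_apply_sub_div (F : CircleDeg1Lift) (x : ℕ → ℝ) :
    Tendsto (fun n : ℕ => ((F ^ n) (x n) - x n) / n) atTop (𝓝 F.translationNumber) := by
  refine tendsto_iff_dist_tendsto_zero.2 <|
    squeeze_zero' (Eventually.of_forall fun _ => dist_nonneg) ?_
      (tendsto_const_div_atTop_nhds_zero_nat 1)
  filter_upwards [eventually_gt_atTop 0] with n hn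
  have hn' : (0 : ℝ) < n := by exact_mod_cast hn
  have h := (F ^ n).abs_map_sub_sub_translationNumber_lt (x n)
  rw [translationNumber_pow] at h
  rw [Real.dist_eq, div_sub' hn'.ne', abs_div, abs_of_pos hn',
    div_le_div_iff_of_pos_right hn']
  exact h.le

end CircleDeg1Lift

def intTranslates (K : Set ℝ) : Set ℝ := {x | ∃ m : ℤ, x - m ∈ K}

theorem subset_intTranslates (K : Set ℝ) : K ⊆ intTranslates K :=
  fun x hx => ⟨0, by simpa using hx⟩

theorem sub_int_mem_intTranslates {K : Set ℝ} {x : ℝ} (hx : x ∈ intTranslates K) (m : ℤ) :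
    x - m ∈ intTranslates K := by
  obtain ⟨k, hk⟩ := hx
  exact ⟨k - m, by rwa [Int.cast_sub, sub_sub, add_sub_cancel]⟩

theorem intTranslates_eq_add_range_intCast (K : Set ℝ) :
    intTranslates K = K + range ((↑) : ℤ → ℝ) := by
  ext x
  simp only [intTranslates, mem_ofPred_eq, Set.mem_add, mem_range, exists_exists_eq_and]
  exact ⟨fun ⟨m, hm⟩ => ⟨_, hm, m, sub_add_cancel x m⟩,
    fun ⟨a, ha, m, hx⟩ => ⟨m, by rwa [← hx, add_sub_cancel_right]⟩⟩

theorem IsCompact.isClosed_intTranslates {K : Set ℝ} (hK : IsCompact K) :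
    IsClosed (intTranslates K) := by
  rw [intTranslates_eq_add_range_intCast]
  exact Real.isClosed_range_intCast.add_left_of_isCompact hK

section BackwardOrbit

variable {α : Type*} {f : α → α}

theorem exists_backward_orbit {S : Set α} (hS : ∀ t, ∃ s ∈ S, f s = t) {p : α} (hp : p ∈ S) :
    ∃ y : ℕ → α, y 0 = p ∧ (∀ k, f (y (k + 1)) = y k) ∧ ∀ k, y k ∈ S := by
  choose g hgS hg using hS
  refine ⟨fun k => g^[k] p, rfl, fun k => ?_, fun k => ?_⟩
  · simp only [iterate_succ_apply', hg]
  · cases k with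
    | zero => exact hp
    | succ k => simp only [iterate_succ_apply', hgS]

theorem iterate_backward_orbit {y : ℕ → α} (hy : ∀ k, f (y (k + 1)) = y k) (k n : ℕ) :
    f^[k] (y (k + n)) = y n := by
  induction k generalizing n with
  | zero => simp
  | succ k ih => rw [iterate_succ_apply', show k + 1 + n = k + (n + 1) by omega, ih, hy]

theorem iterate_eq_of_eqOn {g : α → α} {S : Set α} (h : EqOn g f S) {x : α}
    (hx : ∀ k, f^[k] x ∈ S) (n : ℕ) : g^[n] x = f^[n] x := by
  induction n with
  | zero => rfl
  | succ n ih => rw [iterate_succ_apply', iterate_succ_apply', ih, h (hx n)]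

end BackwardOrbit

namespace IsDegreeOneLift

variable {f : ℝ → ℝ}

theorem map_add_int (hf : IsDegreeOneLift f) (m : ℤ) (x : ℝ) : f (x + m) = f x + m := by
  induction m using Int.induction_on generalizing x with
  | zero => simp
  | succ k ih => rw [Int.cast_add, Int.cast_one, ← add_assoc, hf.2, ih]; ring
  | pred k ih =>
    have h := hf.2 (x + ((-k - 1 : ℤ) : ℝ))
    rw [show x + ((-k - 1 : ℤ) : ℝ) + 1 = x + ((-k : ℤ) : ℝ) by push_cast; ring, ih] at h
    push_cast at h ⊢
    linarith

theorem map_sub_int (hf : IsDegreeOneLift f) (m : ℤ) (x : ℝ) : f (x - m) = f x - m := by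
  simpa [sub_eq_add_neg] using hf.map_add_int (-m) x

theorem iterate_map_sub_int (hf : IsDegreeOneLift f) (n : ℕ) (m : ℤ) (x : ℝ) :
    f^[n] (x - m) = f^[n] x - m :=
  Commute.iterate_left (g := (· - (m : ℝ))) (hf.map_sub_int m) n x

theorem isCompact_range_sub (hf : IsDegreeOneLift f) : IsCompact (range fun x => f x - x) :=
  Periodic.compact_of_continuous (c := 1) (fun x => by simp only [hf.2]; ring) one_ne_zero
    (hf.1.sub continuous_id)

theorem bddAbove_image_Iic (hf : IsDegreeOneLift f) (x : ℝ) : BddAbove (f '' Iic x) := by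
  obtain ⟨C, hC⟩ := hf.isCompact_range_sub.bddAbove
  refine ⟨x + C, ?_⟩
  rintro _ ⟨t, ht, rfl⟩
  linarith [hC ⟨t, rfl⟩, mem_Iic.1 ht]

theorem exists_add_mul_le_iterate (hf : IsDegreeOneLift f) :
    ∃ c : ℝ, ∀ (n : ℕ) (x : ℝ), x + n * c ≤ f^[n] x := by
  obtain ⟨c, hc⟩ := hf.isCompact_range_sub.bddBelow
  refine ⟨c, fun n x => ?_⟩
  induction n with
  | zero => simp
  | succ n ih =>
    rw [iterate_succ_apply']
    push_cast
    linarith [hc ⟨f^[n] x, rfl⟩]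

noncomputable def upper (hf : IsDegreeOneLift f) : CircleDeg1Lift where
  toFun x := sSup (f '' Iic x)
  monotone' _ _ hxy := csSup_le_csSup (hf.bddAbove_image_Iic _) (nonempty_Iic.image f)
    (image_mono (Iic_subset_Iic.2 hxy))
  map_add_one' x := by
    have h : f '' Iic (x + 1) = OrderIso.addRight (1 : ℝ) '' (f '' Iic x) := by
      rw [← image_add_const_Iic, image_image, image_image]
      simp [hf.2]
    rw [h, ← OrderIso.map_csSup' _ (nonempty_Iic.image f) (hf.bddAbove_image_Iic x)]
    rfl

theorem le_upper (hf : IsDegreeOneLift f) : f ≤ hf.upper := fun x =>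
  le_csSup (hf.bddAbove_image_Iic x) (mem_image_of_mem f self_mem_Iic)

theorem upper_apply_eq {x : ℝ} (hf : IsDegreeOneLift f) (hx : ∀ t ≤ x, f t ≤ f x) :
    hf.upper x = f x :=
  IsGreatest.csSup_eq ⟨mem_image_of_mem f self_mem_Iic, by rintro _ ⟨t, ht, rfl⟩; exact hx t ht⟩

theorem limsup_le_translationNumber (hf : IsDegreeOneLift f) (x : ℝ) :
    limsup (fun n : ℕ => (f^[n] x - x) / n) atTop ≤ hf.upper.translationNumber := by
  obtain ⟨c, hc⟩ := hf.exists_add_mul_le_iterate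
  have hupper := hf.upper.tendsto_translationNumber x
  simp only [CircleDeg1Lift.coe_pow] at hupper
  refine (limsup_le_limsup (Eventually.of_forall fun n => ?_) ?_ hupper.isBoundedUnder_le).trans
    hupper.limsup_eq.le
  · gcongr
    exact hf.upper.monotone.le_iterate_of_le hf.le_upper n x
  · refine isCoboundedUnder_le_of_eventually_le atTop (x := c) ?_
    filter_upwards [eventually_gt_atTop 0] with n hn
    rw [le_div_iff₀ (by exact_mod_cast hn)]
    linarith [hc n x]

theorem sSup_rotationSet_eq (hf : IsDegreeOneLift f) {p : ℝ}
    (hp : Tendsto (fun n : ℕ => (f^[n] p - p) / n) atTop (𝓝 hf.upper.translationNumber)) :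
    sSup (rotationSet f) = hf.upper.translationNumber :=
  IsGreatest.csSup_eq
    ⟨⟨p, hp.limsup_eq⟩, by rintro _ ⟨x, rfl⟩; exact hf.limsup_le_translationNumber x⟩

theorem exists_mem_intTranslates_apply_eq (hf : IsDegreeOneLift f) {a b : ℝ} (hab : a ≤ b)
    (hfab : f b = f a + 1) (t : ℝ) : ∃ s ∈ intTranslates (Icc a b), f s = t := by
  set m := ⌊t - f a⌋
  have hm : t - m ∈ Icc (f a) (f b) :=
    ⟨by linarith [Int.floor_le (t - f a)], by linarith [Int.lt_floor_add_one (t - f a)]⟩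
  obtain ⟨s, hs, hfs⟩ := intermediate_value_Icc hab hf.1.continuousOn hm
  refine ⟨s + m, ⟨m, by rwa [add_sub_cancel_right]⟩, ?_⟩
  rw [hf.map_add_int, hfs, sub_add_cancel]

theorem apply_le_of_forall_Icc_le {z x t : ℝ} (hf : IsDegreeOneLift f) (hzx : z ≤ x)
    (hfund : ∀ s ∈ Icc z (z + 1), f s ≤ f (z + 1)) (hx : ∀ s ∈ Icc z x, f s ≤ f x)
    (htx : t ≤ x) : f t ≤ f x := by
  rcases le_or_gt z t with hzt | htz
  · exact hx t ⟨hzt, htx⟩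
  set m := ⌊t - z⌋
  have hm : (m : ℝ) ≤ -1 := by
    have : m < 0 := Int.floor_lt.2 (by push_cast; linarith)
    exact_mod_cast Int.le_sub_one_of_lt this
  have hfloor : t - m ∈ Icc z (z + 1) :=
    ⟨by linarith [Int.floor_le (t - z)], by linarith [Int.lt_floor_add_one (t - z)]⟩
  calc f t = f (t - m) + m := by rw [hf.map_sub_int, sub_add_cancel]
    _ ≤ f (z + 1) - 1 := by linarith [hfund _ hfloor]
    _ = f z := by rw [hf.2, add_sub_cancel_right]
    _ ≤ f x := hx z ⟨le_rfl, hzx⟩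

theorem upper_eqOn_intTranslates (hf : IsDegreeOneLift f) {K : Set ℝ}
    (hK : ∀ x ∈ K, ∀ t ≤ x, f t ≤ f x) : EqOn hf.upper f (intTranslates K) := by
  rintro x ⟨m, hm⟩
  refine hf.upper_apply_eq fun t htx => ?_
  have h := hK _ hm (t - m) (by linarith)
  rwa [hf.map_sub_int, hf.map_sub_int, sub_le_sub_iff_right] at h

theorem exists_mem_forall_iterate_mem (hf : IsDegreeOneLift f) {K : Set ℝ} (hK : IsCompact K)
    (hne : K.Nonempty) (hsurj : ∀ t, ∃ s ∈ intTranslates K, f s = t) :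
    ∃ p ∈ K, ∀ k, f^[k] p ∈ intTranslates K := by
  set T : ℕ → Set ℝ := fun n => K ∩ ⋂ (k) (_ : k ≤ n), f^[k] ⁻¹' intTranslates K
  have hT : ∀ n, (T n).Nonempty := by
    intro n
    obtain ⟨q, hq⟩ := hne
    obtain ⟨y, rfl, hy, hyK⟩ := exists_backward_orbit hsurj (subset_intTranslates K hq)
    obtain ⟨m, hm⟩ := hyK n
    -- a backward orbit of length `n`, translated into `K`
    refine ⟨y n - m, hm, mem_iInter₂.2 fun k hk => ?_⟩
    obtain ⟨j, rfl⟩ := Nat.exists_eq_add_of_le hk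
    rw [mem_preimage, hf.iterate_map_sub_int, iterate_backward_orbit hy]
    exact sub_int_mem_intTranslates (hyK j) m
  have hTcl : ∀ n, IsClosed (T n) := fun n => hK.isClosed.inter
    (isClosed_biInter fun k _ => hK.isClosed_intTranslates.preimage (hf.1.iterate k))
  obtain ⟨p, hp⟩ := IsCompact.nonempty_iInter_of_sequence_nonempty_isCompact_isClosed T
    (fun n => inter_subset_inter_right _
      (biInter_mono (fun _ => Nat.le_succ_of_le) fun _ _ => subset_rfl))
    hT (hK.of_isClosed_subset (hTcl 0) inter_subset_left) hTcl
  have hpT := mem_iInter.1 hp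
  exact ⟨p, (hpT 0).1, fun k => mem_iInter₂.1 (hpT k).2 k le_rfl⟩

end IsDegreeOneLift

namespace IsTwoTurnsLift

variable {f : ℝ → ℝ} {z₀ y₀ w₀ : ℝ}

theorem mem_Icc_and_apply_eq (hf : IsTwoTurnsLift f z₀ y₀)
    (hw₀ : w₀ = sSup {x ∈ Icc z₀ (z₀ + 1) | f x = f z₀}) :
    w₀ ∈ Icc y₀ (z₀ + 1) ∧ f w₀ = f z₀ := by
  obtain ⟨⟨hcont, hper⟩, hzy, hyz, hanti, -⟩ := hf
  set S := {x ∈ Icc z₀ (z₀ + 1) | f x = f z₀}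
  have hbdd : BddAbove S := bddAbove_Icc.mono fun _ hx => hx.1
  have hS : w₀ ∈ S := hw₀ ▸ (isClosed_Icc.inter (isClosed_eq hcont continuous_const)).csSup_mem
    ⟨z₀, ⟨le_rfl, by linarith⟩, rfl⟩ hbdd
  obtain ⟨c, hc, hfc⟩ := intermediate_value_Icc hyz.le hcont.continuousOn
    ⟨hanti.antitoneOn ⟨le_rfl, hzy.le⟩ ⟨hzy.le, le_rfl⟩ hzy.le, by rw [hper]; linarith⟩
  have hcS : c ∈ S := ⟨⟨by linarith [hc.1], hc.2⟩, hfc⟩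
  exact ⟨⟨hc.1.trans (hw₀ ▸ le_csSup hbdd hcS), hS.1.2⟩, hS.2⟩

theorem apply_le_of_le (hf : IsTwoTurnsLift f z₀ y₀) (hw : w₀ ∈ Icc y₀ (z₀ + 1))
    (hfw : f w₀ = f z₀) {x t : ℝ} (hx : x ∈ Icc w₀ (z₀ + 1)) (htx : t ≤ x) : f t ≤ f x := by
  obtain ⟨hlift, hzy, -, hanti, hmono⟩ := hf
  have hIcc : ∀ x ∈ Icc w₀ (z₀ + 1), ∀ s ∈ Icc z₀ x, f s ≤ f x := by
    intro x hx s hs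
    rcases le_total s y₀ with hsy | hys
    · calc f s ≤ f z₀ := hanti.antitoneOn ⟨le_rfl, hzy.le⟩ ⟨hs.1, hsy⟩ hs.1
        _ = f w₀ := hfw.symm
        _ ≤ f x := hmono.monotoneOn hw ⟨hw.1.trans hx.1, hx.2⟩ hx.1
    · exact hmono.monotoneOn ⟨hys, hs.2.trans hx.2⟩ ⟨hw.1.trans hx.1, hx.2⟩ hs.2
  exact hlift.apply_le_of_forall_Icc_le (hzy.le.trans (hw.1.trans hx.1)) (hIcc _ ⟨hw.2, le_rfl⟩)
    (hIcc x hx) htx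

end IsTwoTurnsLift

theorem backward_orbit_in_efficient_climbing_interval
    (f : ℝ → ℝ) (z₀ y₀ : ℝ) (hf : IsTwoTurnsLift f z₀ y₀)
    (w₀ : ℝ) (hw₀ : w₀ = sSup {x ∈ Set.Icc z₀ (z₀ + 1) | f x = f z₀})
    (J : Set ℝ) (hJ : J = Set.Icc w₀ (z₀ + 1)) :
    ∃ y : ℕ → ℝ,
      y 0 ∈ J ∧
      (∀ k : ℕ, f (y (k + 1)) = y k) ∧
      (∀ k : ℕ, ∃ m : ℤ, y k - (m : ℝ) ∈ J) ∧
      Tendsto (fun n : ℕ => (f^[n] (y 0) - y 0) / (n : ℝ)) atTop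
        (𝓝 (sSup (rotationSet f))) ∧
      Tendsto (fun n : ℕ => (y 0 - y n) / (n : ℝ)) atTop
        (𝓝 (sSup (rotationSet f))) := by
  obtain ⟨hw, hfw⟩ := hf.mem_Icc_and_apply_eq hw₀
  subst hJ
  have hlift : IsDegreeOneLift f := hf.1
  have hsurj := hlift.exists_mem_intTranslates_apply_eq hw.2 (by rw [hfw, hlift.2])
  have hupper := hlift.upper_eqOn_intTranslates fun _ hx _ => hf.apply_le_of_le hw hfw hx
  obtain ⟨p, hpJ, hpG⟩ :=
    hlift.exists_mem_forall_iterate_mem isCompact_Icc (nonempty_Icc.2 hw.2) hsurj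
  obtain ⟨y, rfl, hy, hyG⟩ := exists_backward_orbit hsurj (subset_intTranslates _ hpJ)
  set τ := hlift.upper.translationNumber
  have hfwd : Tendsto (fun n : ℕ => (f^[n] (y 0) - y 0) / n) atTop (𝓝 τ) := by
    simpa only [CircleDeg1Lift.coe_pow, iterate_eq_of_eqOn hupper hpG]
      using hlift.upper.tendsto_translationNumber (y 0)
  have hbwd : Tendsto (fun n : ℕ => (y 0 - y n) / n) atTop (𝓝 τ) := by
    have hyF (k : ℕ) : hlift.upper (y (k + 1)) = y k := (hupper (hyG (k + 1))).trans (hy k)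
    refine (hlift.upper.tendsto_pow_apply_sub_div y).congr fun n => ?_
    have hn : hlift.upper^[n] (y n) = y 0 := iterate_backward_orbit hyF n 0
    rw [CircleDeg1Lift.coe_pow, hn]
  rw [hlift.sSup_rotationSet_eq hfwd]
  exact ⟨y, hpJ, hy, hyG, hfwd, hbwd⟩
end

section
/- Let f : ℝ → ℝ be the lift of a circle endomorphism with two turns, with turning data z₀ < y₀ < z₀ + 1, and let J = [w₀, z₀+1] be its efficient climbing interval. Then f(w₀) = f(z₀), f(z₀+1) = f(z₀) + 1, and the image f(J) equals the interval [f(z₀), f(z₀)+1], which has length 1. Consequently ⋃_{m∈ℤ} f(J + m) = ℝ; in particular, for every z ∈ ℝ there exist m ∈ ℤ and y ∈ J + m with f(y) = z. -/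
open Filter Topology

/-!
On `[z₀, z₀ + 1]` the lift first descends from `f z₀` to `f y₀ < f z₀` and then climbs to
`f z₀ + 1`, so by the intermediate value theorem `f` returns to the level `f z₀` on the climbing
branch. Hence the last return `w₀` lies in `[y₀, z₀ + 1]`, where `f` is continuous and increasing,
and `f` maps `[w₀, z₀ + 1]` onto `[f z₀, f z₀ + 1]`. Since `f (x + m) = f x + m`, the integer
translates of this interval of length one cover `ℝ`.
-/

open Set

namespace IsDegreeOneLift

variable {f : ℝ → ℝ}

theorem map_add_intCast (hf : IsDegreeOneLift f) (x : ℝ) (m : ℤ) : f (x + m) = f x + m := by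
  have hper : Function.Periodic (fun x => f x - x) 1 := fun x => by
    simp only [hf.2 x]; ring
  have := hper.int_mul m x
  simp only [mul_one] at this
  linarith

theorem image_image_add_intCast (hf : IsDegreeOneLift f) (s : Set ℝ) (m : ℤ) :
    f '' ((fun x => x + (m : ℝ)) '' s) = (fun x => x + (m : ℝ)) '' (f '' s) := by
  simp only [image_image, hf.map_add_intCast]

theorem iUnion_image_image_add_intCast_eq_univ (hf : IsDegreeOneLift f) {s : Set ℝ} {a : ℝ}
    (hs : f '' s = Icc a (a + 1)) :
    ⋃ m : ℤ, f '' ((fun x => x + (m : ℝ)) '' s) = univ := by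
  simp_rw [hf.image_image_add_intCast, hs, image_add_const_Icc, add_right_comm a 1]
  exact iUnion_Icc_add_intCast a

end IsDegreeOneLift

namespace IsTwoTurnsLift

variable {f : ℝ → ℝ} {z₀ y₀ : ℝ}

theorem exists_mem_Icc_map_eq (hf : IsTwoTurnsLift f z₀ y₀) :
    ∃ x ∈ Icc y₀ (z₀ + 1), f x = f z₀ := by
  obtain ⟨⟨hcont, hper⟩, hzy, hyz, hanti, -⟩ := hf
  have hfy : f y₀ < f z₀ := hanti ⟨le_rfl, hzy.le⟩ ⟨hzy.le, le_rfl⟩ hzy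
  refine intermediate_value_Icc hyz.le hcont.continuousOn ⟨hfy.le, ?_⟩
  rw [hper]
  linarith

/-- The supremum is `w₀`, the left end of the efficient climbing interval. -/
theorem sSup_mem_levelSet (hf : IsTwoTurnsLift f z₀ y₀) :
    sSup {x ∈ Icc z₀ (z₀ + 1) | f x = f z₀} ∈ {x ∈ Icc z₀ (z₀ + 1) | f x = f z₀} :=
  (isClosed_Icc.inter (isClosed_eq hf.1.1 continuous_const)).csSup_mem
    ⟨z₀, ⟨le_rfl, by linarith [hf.2.1, hf.2.2.1]⟩, rfl⟩ ⟨z₀ + 1, fun _ hx => hx.1.2⟩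

theorem le_sSup_levelSet (hf : IsTwoTurnsLift f z₀ y₀) :
    y₀ ≤ sSup {x ∈ Icc z₀ (z₀ + 1) | f x = f z₀} := by
  obtain ⟨x, hx, hfx⟩ := hf.exists_mem_Icc_map_eq
  exact hx.1.trans <|
    le_csSup ⟨z₀ + 1, fun _ h => h.1.2⟩ ⟨⟨hf.2.1.le.trans hx.1, hx.2⟩, hfx⟩

theorem image_Icc_sSup_levelSet (hf : IsTwoTurnsLift f z₀ y₀) :
    f '' Icc (sSup {x ∈ Icc z₀ (z₀ + 1) | f x = f z₀}) (z₀ + 1) = Icc (f z₀) (f z₀ + 1) := by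
  obtain ⟨⟨-, hwz⟩, hfw⟩ := hf.sSup_mem_levelSet
  have hmono := hf.2.2.2.2.mono (Icc_subset_Icc_left hf.le_sSup_levelSet)
  rw [hf.1.1.continuousOn.image_Icc_of_monotoneOn hwz hmono.monotoneOn, hfw, hf.1.2]

end IsTwoTurnsLift

theorem image_of_efficient_climbing_interval
    (f : ℝ → ℝ) (z₀ y₀ : ℝ) (hf : IsTwoTurnsLift f z₀ y₀)
    (w₀ : ℝ) (hw₀ : w₀ = sSup {x ∈ Set.Icc z₀ (z₀ + 1) | f x = f z₀})
    (J : Set ℝ) (hJ : J = Set.Icc w₀ (z₀ + 1)) :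
    f w₀ = f z₀ ∧
    f (z₀ + 1) = f z₀ + 1 ∧
    f '' J = Set.Icc (f z₀) (f z₀ + 1) ∧
    (⋃ m : ℤ, f '' ((fun x => x + (m : ℝ)) '' J)) = Set.univ ∧
    (∀ z : ℝ, ∃ m : ℤ, ∃ y : ℝ, y - (m : ℝ) ∈ J ∧ f y = z) := by
  subst hw₀ hJ
  have himage := hf.image_Icc_sSup_levelSet
  have hcover := hf.1.iUnion_image_image_add_intCast_eq_univ himage
  refine ⟨hf.sSup_mem_levelSet.2, hf.1.2 z₀, himage, hcover, fun z => ?_⟩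
  obtain ⟨m, hm⟩ := mem_iUnion.1 (hcover.symm ▸ mem_univ z)
  obtain ⟨_, ⟨x, hx, rfl⟩, rfl⟩ := hm
  exact ⟨m, x + m, by simpa using hx, rfl⟩
end

section
/- Let f : ℝ → ℝ be the lift of a circle endomorphism with two turns, with turning data z₀ < y₀ < z₀ + 1, and let w₀ = sup{ x ∈ [z₀, z₀+1] : f(x) = f(z₀) }. Then there is a well-defined map g : ℝ → ℝ (the water pouring map of f) satisfying g(x) = f(z₀) for x ∈ [z₀, w₀], g(x) = f(x) for x ∈ [w₀, z₀+1], and g(x+1) = g(x) + 1 for all x ∈ ℝ; moreover g is continuous and monotone nondecreasing on ℝ. -/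
open Filter Topology

/-!
On `[z₀, z₀ + 1]` the lift first goes down and then up, from `f z₀` to `f z₀ + 1`, so the level
`f z₀` is crossed a last time at a point `w₀ ∈ (y₀, z₀ + 1)`, and `f ≤ f z₀` on `[z₀, w₀]`.
Filling the valley with water up to that level gives `x ↦ max (f x) (f z₀)` on the fundamental
domain, which is monotone and extends to all of `ℝ` as `x ↦ max (f x) (f z₀ + ⌊x - z₀⌋)`.
A map commuting with `x ↦ x + 1` is monotone once it is so on a fundamental domain, onto once its
range contains an interval of length one, and determined by its values on a fundamental domain;
a monotone surjection `ℝ → ℝ` is continuous.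
-/

open Set Function AddConstMapClass
open scoped AddConstMap

namespace AddConstMapClass

variable {F G H : Type*} [FunLike F G H] {a : G} {b : H}

theorem coe_eq_of_eqOn_Ico [AddCommGroup G] [LinearOrder G] [IsOrderedAddMonoid G]
    [Archimedean G] [AddGroup H] [AddConstMapClass F G H a b] {f g : F} (ha : 0 < a) (l : G)
    (hfg : EqOn f g (Ico l (l + a))) : ⇑f = ⇑g := by
  funext x
  obtain ⟨m, hm, -⟩ := existsUnique_sub_zsmul_mem_Ico ha x l
  simpa only [map_sub_zsmul, sub_left_inj] using hfg hm

theorem surjective_of_Ico_subset_range [AddGroup G] [AddCommGroup H] [LinearOrder H]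
    [IsOrderedAddMonoid H] [Archimedean H] [AddConstMapClass F G H a b] {f : F} (hb : 0 < b)
    (y : H) (hf : Ico y (y + b) ⊆ range f) : Surjective f := by
  intro t
  obtain ⟨m, hm, -⟩ := existsUnique_sub_zsmul_mem_Ico hb t y
  obtain ⟨x, hx⟩ := hf hm
  exact ⟨x + m • a, by rw [map_add_zsmul, hx, sub_add_cancel]⟩

end AddConstMapClass

namespace IsTwoTurnsLift

variable {f : ℝ → ℝ} {z₀ y₀ w x : ℝ}

theorem exists_mem_Ioo_map_eq (hf : IsTwoTurnsLift f z₀ y₀) :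
    ∃ w ∈ Ioo y₀ (z₀ + 1), f w = f z₀ := by
  obtain ⟨⟨hcont, hdeg⟩, hzy, hyz, hanti, -⟩ := hf
  have hfy : f y₀ < f z₀ := hanti (left_mem_Icc.2 hzy.le) (right_mem_Icc.2 hzy.le) hzy
  refine intermediate_value_Ioo hyz.le hcont.continuousOn ⟨hfy, ?_⟩
  rw [hdeg]
  exact lt_add_one _

theorem le_of_map_eq (hf : IsTwoTurnsLift f z₀ y₀) (hx : x ∈ Icc z₀ (z₀ + 1))
    (hfx : f x = f z₀) (hw : w ∈ Ioo y₀ (z₀ + 1)) (hfw : f w = f z₀) : x ≤ w := by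
  rcases le_or_gt x y₀ with hxy | hxy
  · exact hxy.trans hw.1.le
  · exact (hf.2.2.2.2.injOn ⟨hxy.le, hx.2⟩ ⟨hw.1.le, hw.2.le⟩ (hfx.trans hfw.symm)).le

theorem exists_isGreatest (hf : IsTwoTurnsLift f z₀ y₀) :
    ∃ w ∈ Ioo y₀ (z₀ + 1), IsGreatest {x ∈ Icc z₀ (z₀ + 1) | f x = f z₀} w := by
  obtain ⟨w, hw, hfw⟩ := hf.exists_mem_Ioo_map_eq
  refine ⟨w, hw, ⟨⟨⟨hf.2.1.trans hw.1 |>.le, hw.2.le⟩, hfw⟩, ?_⟩⟩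
  rintro x ⟨hx, hfx⟩
  exact hf.le_of_map_eq hx hfx hw hfw

theorem map_le_of_mem_Icc (hf : IsTwoTurnsLift f z₀ y₀) (hw : w ∈ Ioo y₀ (z₀ + 1))
    (hfw : f w = f z₀) (hx : x ∈ Icc z₀ w) : f x ≤ f z₀ := by
  obtain ⟨-, hzy, -, hanti, hmono⟩ := hf
  rcases le_or_gt x y₀ with hxy | hxy
  · exact hanti.antitoneOn (left_mem_Icc.2 hzy.le) ⟨hx.1, hxy⟩ hx.1
  · exact hfw ▸ hmono.monotoneOn ⟨hxy.le, hx.2.trans hw.2.le⟩ ⟨hw.1.le, hw.2.le⟩ hx.2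

theorem map_ge_of_mem_Icc (hf : IsTwoTurnsLift f z₀ y₀) (hw : y₀ ≤ w) (hfw : f w = f z₀)
    (hx : x ∈ Icc w (z₀ + 1)) : f z₀ ≤ f x :=
  hfw ▸ hf.2.2.2.2.monotoneOn ⟨hw, hx.1.trans hx.2⟩ ⟨hw.trans hx.1, hx.2⟩ hx.1

theorem monotoneOn_max_map (hf : IsTwoTurnsLift f z₀ y₀) (hw : w ∈ Ioo y₀ (z₀ + 1))
    (hfw : f w = f z₀) : MonotoneOn (fun x ↦ max (f x) (f z₀)) (Icc z₀ (z₀ + 1)) := by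
  intro x hx y hy hxy
  rcases le_or_gt x w with hxw | hwx
  · simp only [max_eq_right (hf.map_le_of_mem_Icc hw hfw ⟨hx.1, hxw⟩), le_max_right]
  · have hfxy : f x ≤ f y :=
      hf.2.2.2.2.monotoneOn ⟨hw.1.trans hwx |>.le, hx.2⟩ ⟨(hw.1.trans hwx).le.trans hxy, hy.2⟩ hxy
    exact max_le_max_right _ hfxy

end IsTwoTurnsLift

noncomputable def waterPouringMap (f : ℝ → ℝ) (hf : ∀ x, f (x + 1) = f x + 1) (z₀ : ℝ) :
    ℝ →+c[1, 1] ℝ where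
  toFun x := max (f x) (f z₀ + ⌊x - z₀⌋)
  map_add_const' x := by
    rw [hf, add_sub_right_comm, Int.floor_add_one, Int.cast_add, Int.cast_one, ← add_assoc,
      max_add_add_right]

theorem waterPouringMap_apply_of_mem_Icc {f : ℝ → ℝ} (hf : ∀ x, f (x + 1) = f x + 1) {z₀ x : ℝ}
    (hx : x ∈ Icc z₀ (z₀ + 1)) : waterPouringMap f hf z₀ x = max (f x) (f z₀) := by
  rcases hx.2.lt_or_eq with hxz | rfl
  · have : ⌊x - z₀⌋ = 0 := Int.floor_eq_zero_iff.2 ⟨sub_nonneg.2 hx.1, by linarith⟩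
    simp [waterPouringMap, this]
  · simp [waterPouringMap, hf]

namespace IsTwoTurnsLift

variable {f : ℝ → ℝ} {z₀ y₀ w x : ℝ}

theorem waterPouringMap_eq_of_mem_Icc_left (hf : IsTwoTurnsLift f z₀ y₀)
    (hw : w ∈ Ioo y₀ (z₀ + 1)) (hfw : f w = f z₀) (hx : x ∈ Icc z₀ w) :
    waterPouringMap f hf.1.2 z₀ x = f z₀ := by
  rw [waterPouringMap_apply_of_mem_Icc _ ⟨hx.1, hx.2.trans hw.2.le⟩,
    max_eq_right (hf.map_le_of_mem_Icc hw hfw hx)]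

theorem waterPouringMap_eq_of_mem_Icc_right (hf : IsTwoTurnsLift f z₀ y₀)
    (hw : w ∈ Ioo y₀ (z₀ + 1)) (hfw : f w = f z₀) (hx : x ∈ Icc w (z₀ + 1)) :
    waterPouringMap f hf.1.2 z₀ x = f x := by
  rw [waterPouringMap_apply_of_mem_Icc _ ⟨(hf.2.1.trans hw.1).le.trans hx.1, hx.2⟩,
    max_eq_left (hf.map_ge_of_mem_Icc hw.1.le hfw hx)]

theorem monotone_waterPouringMap (hf : IsTwoTurnsLift f z₀ y₀) (hw : w ∈ Ioo y₀ (z₀ + 1))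
    (hfw : f w = f z₀) : Monotone (waterPouringMap f hf.1.2 z₀) :=
  (monotone_iff_Icc one_pos z₀).2 <| (hf.monotoneOn_max_map hw hfw).congr
    fun _ hx ↦ (waterPouringMap_apply_of_mem_Icc _ hx).symm

theorem surjective_waterPouringMap (hf : IsTwoTurnsLift f z₀ y₀) (hw : w ∈ Ioo y₀ (z₀ + 1))
    (hfw : f w = f z₀) : Surjective (waterPouringMap f hf.1.2 z₀) := by
  refine surjective_of_Ico_subset_range one_pos (f z₀) fun t ht ↦ ?_
  have hft : t ∈ Icc (f w) (f (z₀ + 1)) := by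
    rw [hfw, hf.1.2]
    exact Ico_subset_Icc_self ht
  obtain ⟨x, hx, rfl⟩ := intermediate_value_Icc hw.2.le hf.1.1.continuousOn hft
  exact ⟨x, hf.waterPouringMap_eq_of_mem_Icc_right hw hfw hx⟩

end IsTwoTurnsLift

theorem water_pouring_map_exists
    (f : ℝ → ℝ) (z₀ y₀ : ℝ) (hf : IsTwoTurnsLift f z₀ y₀)
    (w₀ : ℝ) (hw₀ : w₀ = sSup {x ∈ Set.Icc z₀ (z₀ + 1) | f x = f z₀}) :
    ∃ g : ℝ → ℝ,
      (∀ x ∈ Set.Icc z₀ w₀, g x = f z₀) ∧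
      (∀ x ∈ Set.Icc w₀ (z₀ + 1), g x = f x) ∧
      (∀ x : ℝ, g (x + 1) = g x + 1) ∧
      Continuous g ∧ Monotone g ∧
      (∀ g' : ℝ → ℝ,
        (∀ x ∈ Set.Icc z₀ w₀, g' x = f z₀) →
        (∀ x ∈ Set.Icc w₀ (z₀ + 1), g' x = f x) →
        (∀ x : ℝ, g' (x + 1) = g' x + 1) → g' = g) := by
  obtain ⟨w, hw, hgreat⟩ := hf.exists_isGreatest
  obtain rfl : w₀ = w := hw₀.trans hgreat.csSup_eq
  have hfw : f w₀ = f z₀ := hgreat.1.2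
  set g := waterPouringMap f hf.1.2 z₀
  have hg_left := fun x ↦ hf.waterPouringMap_eq_of_mem_Icc_left (x := x) hw hfw
  have hg_right := fun x ↦ hf.waterPouringMap_eq_of_mem_Icc_right (x := x) hw hfw
  have hg_mono : Monotone g := hf.monotone_waterPouringMap hw hfw
  refine ⟨g, hg_left, hg_right, map_add_one g,
    hg_mono.continuous_of_surjective (hf.surjective_waterPouringMap hw hfw), hg_mono, ?_⟩
  intro g' hg'_left hg'_right hg'
  refine coe_eq_of_eqOn_Ico (f := (⟨g', hg'⟩ : ℝ →+c[1, 1] ℝ)) (g := g) one_pos z₀ fun x hx ↦ ?_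
  rcases le_total x w₀ with hxw | hwx
  · exact (hg'_left x ⟨hx.1, hxw⟩).trans (hg_left x ⟨hx.1, hxw⟩).symm
  · exact (hg'_right x ⟨hwx, hx.2.le⟩).trans (hg_right x ⟨hwx, hx.2.le⟩).symm
end

section
/- Let f : ℝ → ℝ be the lift of a circle endomorphism with two turns, with turning data z₀ < y₀ < z₀ + 1, let J = [w₀, z₀+1] be its efficient climbing interval, and let g be its water pouring map. Suppose (y_{−k})_{k≥0} is a sequence with f(y_{−(k+1)}) = y_{−k} and y_{−k} ∈ ⋃_{m∈ℤ} (J + m) for all k ≥ 0. Then the limit lim_{n→∞} (y_{−0} − y_{−n})/n exists and equals the translation number τ(g) := lim_{n→∞} gⁿ(0)/n of the monotone degree-one map g (which exists); in particular this backward rotation number is independent of the choice of such a backward orbit. -/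
/-!
On every translate `J + m` the water pouring map `g` agrees with `f`, because both commute with
integer translations and agree on `J`. Hence a backward `f`-orbit staying in `⋃ₘ (J + m)` is a
backward `g`-orbit, i.e. `gⁿ(y₋ₙ) = y₀`. For a monotone degree-one map `g`, the displacement
`gⁿ(x) - x` differs from `gⁿ(0)` by less than `1` uniformly in `x`, so `(y₀ - y₋ₙ)/n` has the same
limit as `gⁿ(0)/n`, namely the translation number of `g`.
-/

open Filter Topology

theorem Function.iterate_apply_eq_of_apply_succ_eq {α : Type*} {g : α → α} {y : ℕ → α}
    (hy : ∀ k, g (y (k + 1)) = y k) (n : ℕ) : g^[n] (y n) = y 0 := by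
  induction n with
  | zero => rfl
  | succ n ih => rw [Function.iterate_succ_apply, hy, ih]

theorem apply_eq_of_eqOn_of_sub_int_mem {f g : ℝ → ℝ} (hf : ∀ x, f (x + 1) = f x + 1)
    (hg : ∀ x, g (x + 1) = g x + 1) {J : Set ℝ} (hfg : Set.EqOn g f J) {x : ℝ} {m : ℤ}
    (hx : x - m ∈ J) : g x = f x := by
  let F : AddConstMap ℝ ℝ 1 1 := ⟨f, hf⟩
  let G : AddConstMap ℝ ℝ 1 1 := ⟨g, hg⟩
  calc g x = G (x - m + m) := by rw [sub_add_cancel]; rfl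
    _ = f (x - m) + m := by rw [AddConstMapClass.map_add_int, ← hfg hx]; rfl
    _ = F (x - m + m) := (AddConstMapClass.map_add_int F _ _).symm
    _ = f x := by rw [sub_add_cancel]; rfl

namespace CircleDeg1Lift

theorem abs_map_sub_sub_map_zero_lt (f : CircleDeg1Lift) (x : ℝ) : |f x - x - f 0| < 1 := by
  have hle := f.map_le_of_map_zero x
  have hge := f.le_map_of_map_zero x
  have hceil := Int.ceil_lt_add_one x
  have hfloor := Int.sub_one_lt_floor x
  rw [abs_lt]
  constructor <;> linarith

theorem tendsto_translationNumber_of_seq (f : CircleDeg1Lift) (x : ℕ → ℝ) :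
    Tendsto (fun n : ℕ => ((f ^ n) (x n) - x n) / n) atTop (𝓝 f.translationNumber) := by
  have hsmall : Tendsto (fun n : ℕ => ((f ^ n) (x n) - x n - (f ^ n) 0) / n) atTop (𝓝 0) := by
    refine squeeze_zero_norm (fun n => ?_) (tendsto_const_div_atTop_nhds_zero_nat 1)
    rw [norm_div, Real.norm_natCast, Real.norm_eq_abs]
    exact div_le_div_of_nonneg_right ((f ^ n).abs_map_sub_sub_map_zero_lt (x n)).le n.cast_nonneg
  refine (add_zero f.translationNumber ▸ f.tendsto_translation_number₀.add hsmall).congr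
    fun n => ?_
  ring

end CircleDeg1Lift

theorem backward_rotation_number_equals_translation_number_general
    (f : ℝ → ℝ) (z₀ y₀ : ℝ) (hf : IsTwoTurnsLift f z₀ y₀)
    (w₀ : ℝ)
    (J : Set ℝ) (hJ : J = Set.Icc w₀ (z₀ + 1))
    (g : ℝ → ℝ)
    (hg₂ : ∀ x ∈ Set.Icc w₀ (z₀ + 1), g x = f x)
    (hg₃ : ∀ x : ℝ, g (x + 1) = g x + 1)
    (hgm : Monotone g)
    (y : ℕ → ℝ)
    (hy : ∀ k : ℕ, f (y (k + 1)) = y k)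
    (hyJ : ∀ k : ℕ, ∃ m : ℤ, y k - (m : ℝ) ∈ J) :
    ∃ τ : ℝ,
      Tendsto (fun n : ℕ => g^[n] 0 / (n : ℝ)) atTop (𝓝 τ) ∧
      Tendsto (fun n : ℕ => (y 0 - y n) / (n : ℝ)) atTop (𝓝 τ) := by
  subst hJ
  let G : CircleDeg1Lift := ⟨⟨g, hgm⟩, hg₃⟩
  have hG : ∀ n, ⇑(G ^ n) = g^[n] := CircleDeg1Lift.coe_pow G
  have hstep : ∀ k, g (y (k + 1)) = y k := fun k => by
    obtain ⟨m, hm⟩ := hyJ (k + 1)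
    rw [apply_eq_of_eqOn_of_sub_int_mem hf.1.2 hg₃ hg₂ hm, hy]
  refine ⟨G.translationNumber, ?_, ?_⟩
  · simpa only [hG] using G.tendsto_translation_number₀
  · simpa only [hG, Function.iterate_apply_eq_of_apply_succ_eq hstep] using
      G.tendsto_translationNumber_of_seq y

theorem backward_rotation_number_equals_translation_number
    (f : ℝ → ℝ) (z₀ y₀ : ℝ) (hf : IsTwoTurnsLift f z₀ y₀)
    (w₀ : ℝ) (hw₀ : w₀ = sSup {x ∈ Set.Icc z₀ (z₀ + 1) | f x = f z₀})
    (J : Set ℝ) (hJ : J = Set.Icc w₀ (z₀ + 1))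
    (g : ℝ → ℝ)
    (hg₁ : ∀ x ∈ Set.Icc z₀ w₀, g x = f z₀)
    (hg₂ : ∀ x ∈ Set.Icc w₀ (z₀ + 1), g x = f x)
    (hg₃ : ∀ x : ℝ, g (x + 1) = g x + 1)
    (hgc : Continuous g) (hgm : Monotone g)
    (y : ℕ → ℝ)
    (hy : ∀ k : ℕ, f (y (k + 1)) = y k)
    (hyJ : ∀ k : ℕ, ∃ m : ℤ, y k - (m : ℝ) ∈ J) :
    ∃ τ : ℝ,
      Tendsto (fun n : ℕ => g^[n] 0 / (n : ℝ)) atTop (𝓝 τ) ∧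
      Tendsto (fun n : ℕ => (y 0 - y n) / (n : ℝ)) atTop (𝓝 τ) :=
  backward_rotation_number_equals_translation_number_general f z₀ y₀ hf w₀ J hJ g hg₂ hg₃ hgm y hy
    hyJ
end

section
/- Let f : ℝ → ℝ be the lift of a circle endomorphism with two turns, and let g be its water pouring map. Then sup ρ(f) = τ(g), where ρ(f) = { limsup_{n→∞} (fⁿ(x) − x)/n : x ∈ ℝ } is the rotation set of f and τ(g) = lim_{n→∞} gⁿ(0)/n is the translation number of the monotone degree-one map g. -/
/-!
Since `f` decreases on `[z₀, y₀]` and increases on `[y₀, z₀ + 1]`, it stays below `f z₀ = f w₀`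
on `[z₀, w₀]`, so the water pouring map satisfies `f ≤ g`, with equality off the flat intervals
`(z₀, w₀) + ℤ`. As `g` is monotone, `fⁿ ≤ gⁿ`, which bounds every element of `ρ(f)` by `τ(g)`.
Conversely, follow the `g`-orbit of `w₀`. If it never enters a flat interval, it is also the
`f`-orbit of `w₀`, whose rotation number is therefore `τ(g)`. Otherwise let `k > 0` be the first
entrance time, say `gᵏ(w₀) ∈ (z₀, w₀) + m`: then `g w₀` is a periodic point of `g` of type
`m / k`, so `τ(g) = m / k`, while `fᵏ z₀ = fᵏ w₀ = gᵏ w₀ ∈ (z₀ + m, w₀ + m)` and the intermediate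
value theorem gives a point `p ∈ [z₀, w₀]` with `fᵏ p = p + m`, whose rotation number is `m / k`.
-/

open Filter Topology

open scoped AddConstMap

theorem tendsto_div_natCast_of_add_period {u : ℕ → ℝ} {k : ℕ} (hk : 0 < k) {c : ℝ}
    (hu : ∀ n, u (n + k) = u n + c) :
    Tendsto (fun n : ℕ => u n / n) atTop (𝓝 (c / k)) := by
  set v : ℕ → ℝ := fun n => u n - n * (c / k)
  have hv : Function.Periodic v k := fun n => by
    simp only [v, hu, Nat.cast_add]
    field_simp
    ring
  have hbdd : IsBoundedUnder (· ≤ ·) atTop (norm ∘ v) := by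
    have hfin : (Set.range (norm ∘ v)).Finite := by
      refine ((Set.finite_Iio k).image (norm ∘ v)).subset ?_
      rintro _ ⟨n, rfl⟩
      exact ⟨n % k, Nat.mod_lt n hk, by simp [hv.map_mod_nat n]⟩
    obtain ⟨C, hC⟩ := hfin.bddAbove
    exact isBoundedUnder_of ⟨C, fun n => hC ⟨n, rfl⟩⟩
  have hlim : Tendsto (fun n : ℕ => v n * (n : ℝ)⁻¹ + c / k) atTop (𝓝 (0 + c / k)) :=
    (isBoundedUnder_le_mul_tendsto_zero hbdd tendsto_inv_atTop_nhds_zero_nat).add_const _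
  rw [zero_add] at hlim
  refine hlim.congr' ?_
  filter_upwards [eventually_ne_atTop 0] with n hn
  simp only [v]
  field_simp
  ring

theorem tendsto_iterate_div_of_iterate_eq_add (f : ℝ →+c[1, 1] ℝ) {k : ℕ} (hk : 0 < k) {p : ℝ}
    {m : ℤ} (hp : f^[k] p = p + m) :
    Tendsto (fun n : ℕ => (f^[n] p - p) / n) atTop (𝓝 (m / k)) := by
  refine tendsto_div_natCast_of_add_period hk fun n => ?_
  rw [Function.iterate_add_apply, hp, ← AddConstMap.coe_pow, AddConstMapClass.map_add_int,
    AddConstMap.coe_pow]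
  ring

theorem mem_rotationSet_of_tendsto {f : ℝ → ℝ} {x r : ℝ}
    (h : Tendsto (fun n : ℕ => (f^[n] x - x) / n) atTop (𝓝 r)) : r ∈ rotationSet f :=
  ⟨x, h.limsup_eq⟩

theorem bddBelow_range_map_sub_id (f : ℝ →+c[1, 1] ℝ) (hf : Continuous f) :
    BddBelow (Set.range fun x => f x - x) := by
  have hper : Function.Periodic (fun x => f x - x) 1 := fun x => by
    simp only [AddConstMapClass.map_add_one]
    ring
  exact (hper.compact_of_continuous one_ne_zero (hf.sub continuous_id)).bddBelow

theorem limsup_iterate_div_le_translationNumber (G : CircleDeg1Lift) {f : ℝ → ℝ}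
    (hfG : f ≤ G) (hf : BddBelow (Set.range fun x => f x - x)) (x : ℝ) :
    limsup (fun n : ℕ => (f^[n] x - x) / n) atTop ≤ G.translationNumber := by
  obtain ⟨c, hc⟩ := hf
  have hlow : ∀ n : ℕ, n * c ≤ f^[n] x - x := by
    intro n
    induction n with
    | zero => simp
    | succ n ih =>
      have := hc ⟨f^[n] x, rfl⟩
      rw [Function.iterate_succ_apply']
      push_cast
      linarith
  have hG := G.tendsto_translationNumber x
  simp only [CircleDeg1Lift.coe_pow] at hG
  refine (limsup_le_limsup ?_ ?_ hG.isBoundedUnder_le).trans_eq hG.limsup_eq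
  · refine Eventually.of_forall fun n => div_le_div_of_nonneg_right ?_ n.cast_nonneg
    exact sub_le_sub_right (G.monotone.le_iterate_of_le hfG n x) x
  · refine isCoboundedUnder_le_of_eventually_le _ (x := c) ?_
    filter_upwards [eventually_gt_atTop 0] with n hn
    rw [le_div_iff₀ (by exact_mod_cast hn), mul_comm]
    exact hlow n

theorem exists_mem_Icc_map_eq_add {φ : ℝ → ℝ} {a b c : ℝ} (hab : a ≤ b)
    (hφ : ContinuousOn φ (Set.Icc a b)) (ha : a + c ≤ φ a) (hb : φ b ≤ b + c) :
    ∃ p ∈ Set.Icc a b, φ p = p + c := by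
  obtain ⟨p, hp, hp0⟩ := intermediate_value_Icc' hab (hφ.sub continuousOn_id)
    (show (c : ℝ) ∈ Set.Icc (φ b - id b) (φ a - id a) by constructor <;> simp <;> linarith)
  exact ⟨p, hp, by simp at hp0; linarith⟩

theorem exists_sub_intCast_mem_Ico (a x : ℝ) : ∃ m : ℤ, x - m ∈ Set.Ico a (a + 1) := by
  obtain ⟨m, hm, -⟩ := existsUnique_sub_zsmul_mem_Ico one_pos x a
  exact ⟨m, by simpa using hm⟩

theorem iterate_eq_iterate_of_forall_lt {α : Type*} {f g : α → α} {x : α} {n : ℕ}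
    (h : ∀ i < n, f (g^[i] x) = g (g^[i] x)) : f^[n] x = g^[n] x := by
  induction n with
  | zero => rfl
  | succ n ih =>
    rw [Function.iterate_succ_apply', Function.iterate_succ_apply', ih fun i hi => h i (by omega),
      h n n.lt_succ_self]

theorem CircleDeg1Lift.translationNumber_eq_of_iterate_mem_Icc (G : CircleDeg1Lift) {a b v : ℝ}
    (hG : ∀ x ∈ Set.Icc a b, G x = v) {x : ℝ} (hx : x ∈ Set.Icc a b) {k : ℕ} (hk : 0 < k)
    {m : ℤ} (hxk : (G ^ k) x - m ∈ Set.Icc a b) : G.translationNumber = m / k := by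
  refine G.translationNumber_of_map_pow_eq_add_int (x := G x) ?_ hk
  calc (G ^ k) (G x) = G ((G ^ k) x - m) + m := by
        rw [G.map_sub_int, sub_add_cancel, ← CircleDeg1Lift.mul_apply, ← pow_succ,
          pow_succ', CircleDeg1Lift.mul_apply]
    _ = G x + m := by rw [hG _ hxk, hG x hx]

theorem div_mem_rotationSet_of_iterate_mem_Icc (f : ℝ →+c[1, 1] ℝ) (hf : Continuous f)
    {a b : ℝ} (hab : a ≤ b) (hfab : f a = f b) {k : ℕ} (hk : 0 < k) {m : ℤ}
    (hb : f^[k] b - m ∈ Set.Icc a b) : (m / k : ℝ) ∈ rotationSet f := by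
  have hfa : f^[k] a = f^[k] b := by
    obtain ⟨j, rfl⟩ := Nat.exists_eq_succ_of_ne_zero hk.ne'
    rw [Function.iterate_succ_apply, Function.iterate_succ_apply, hfab]
  obtain ⟨p, -, hp⟩ := exists_mem_Icc_map_eq_add (c := m) hab (hf.iterate k).continuousOn
    (by rw [hfa]; linarith [hb.1]) (by linarith [hb.2])
  exact mem_rotationSet_of_tendsto (tendsto_iterate_div_of_iterate_eq_add f hk hp)

theorem translationNumber_mem_rotationSet (f : ℝ →+c[1, 1] ℝ) (hf : Continuous f)
    (G : CircleDeg1Lift) {z w : ℝ} (hzw : z ≤ w) (hwz : w ≤ z + 1) (hfw : f w = f z)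
    (hG : ∀ x ∈ Set.Icc z w, G x = f z)
    (hfG : ∀ x : ℝ, (∀ m : ℤ, x - m ∉ Set.Ioo z w) → f x = G x) :
    G.translationNumber ∈ rotationSet f := by
  classical
  by_cases hhit : ∃ n : ℕ, ∃ m : ℤ, (G ^ n) w - m ∈ Set.Ioo z w
  · obtain ⟨m, hm⟩ := Nat.find_spec hhit
    set k := Nat.find hhit
    have hk : 0 < k := by
      refine Nat.pos_of_ne_zero fun hk0 => ?_
      rw [hk0, pow_zero, CircleDeg1Lift.coe_one, id] at hm
      have hm₀ : (0 : ℝ) < m := by linarith [hm.2]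
      have hm₁ : (m : ℝ) < 1 := by linarith [hm.1]
      norm_cast at hm₀ hm₁
      omega
    have horbit : f^[k] w = (G ^ k) w := by
      rw [CircleDeg1Lift.coe_pow]
      refine iterate_eq_iterate_of_forall_lt fun i hi => hfG _ ?_
      rw [← CircleDeg1Lift.coe_pow]
      exact not_exists.1 (Nat.find_min hhit hi)
    rw [G.translationNumber_eq_of_iterate_mem_Icc hG ⟨hzw, le_rfl⟩ hk
      (Set.Ioo_subset_Icc_self hm)]
    exact div_mem_rotationSet_of_iterate_mem_Icc f hf hzw hfw.symm hk
      (horbit ▸ Set.Ioo_subset_Icc_self hm)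
  · simp only [not_exists] at hhit
    have horbit : ∀ n, f^[n] w = (G ^ n) w := fun n => by
      rw [CircleDeg1Lift.coe_pow]
      refine iterate_eq_iterate_of_forall_lt fun i _ => hfG _ ?_
      rw [← CircleDeg1Lift.coe_pow]
      exact hhit i
    refine mem_rotationSet_of_tendsto (x := w) ?_
    simpa only [horbit] using G.tendsto_translationNumber w

theorem sSup_levelSet_mem {f : ℝ → ℝ} {a b : ℝ} (hf : ContinuousOn f (Set.Icc a b))
    (hab : a ≤ b) :
    sSup {x ∈ Set.Icc a b | f x = f a} ∈ {x ∈ Set.Icc a b | f x = f a} := by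
  have hclosed : IsClosed {x ∈ Set.Icc a b | f x = f a} :=
    hf.preimage_isClosed_of_isClosed isClosed_Icc isClosed_singleton
  exact (isCompact_Icc.of_isClosed_subset hclosed fun x hx => hx.1).sSup_mem
    ⟨a, ⟨le_rfl, hab⟩, rfl⟩

theorem IsTwoTurnsLift.map_le_map_left {f : ℝ → ℝ} {z₀ y₀ w : ℝ} (hf : IsTwoTurnsLift f z₀ y₀)
    (hwz : w ≤ z₀ + 1) (hfw : f w = f z₀) {x : ℝ} (hx : x ∈ Set.Icc z₀ w) : f x ≤ f z₀ := by
  obtain ⟨-, hzy, -, hanti, hmono⟩ := hf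
  rcases le_or_gt x y₀ with hxy | hxy
  · exact hanti.antitoneOn ⟨le_rfl, hzy.le⟩ ⟨hx.1, hxy⟩ hx.1
  · exact hfw ▸ hmono.monotoneOn ⟨hxy.le, hx.2.trans hwz⟩ ⟨hxy.le.trans hx.2, hwz⟩ hx.2

section WaterPouring

variable (f : ℝ →+c[1, 1] ℝ) (G : CircleDeg1Lift) {z w : ℝ}

theorem map_le_of_waterPouring (hfz : ∀ x ∈ Set.Icc z w, f x ≤ f z)
    (hG₁ : ∀ x ∈ Set.Icc z w, G x = f z) (hG₂ : ∀ x ∈ Set.Icc w (z + 1), G x = f x) :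
    ⇑f ≤ G := fun x => by
  obtain ⟨m, hm⟩ := exists_sub_intCast_mem_Ico z x
  suffices f (x - m) ≤ G (x - m) by
    rwa [AddConstMapClass.map_sub_int, G.map_sub_int, sub_le_sub_iff_right] at this
  rcases le_total (x - m) w with hw | hw
  · exact (hfz _ ⟨hm.1, hw⟩).trans_eq (hG₁ _ ⟨hm.1, hw⟩).symm
  · exact (hG₂ _ ⟨hw, hm.2.le⟩).ge

theorem map_eq_of_waterPouring (hzw : z ≤ w) (hG₁ : ∀ x ∈ Set.Icc z w, G x = f z)
    (hG₂ : ∀ x ∈ Set.Icc w (z + 1), G x = f x) {x : ℝ} (hx : ∀ m : ℤ, x - m ∉ Set.Ioo z w) :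
    f x = G x := by
  obtain ⟨m, hm⟩ := exists_sub_intCast_mem_Ico z x
  suffices f (x - m) = G (x - m) by
    rwa [AddConstMapClass.map_sub_int, G.map_sub_int, sub_left_inj] at this
  rcases hm.1.eq_or_lt with hz | hz
  · rw [← hz, hG₁ z ⟨le_rfl, hzw⟩]
  · have hw : w ≤ x - m := not_lt.1 fun hw => hx m ⟨hz, hw⟩
    exact (hG₂ _ ⟨hw, hm.2.le⟩).symm

end WaterPouring

theorem sup_rotation_set_eq_translation_number_of_water_pouring_general
    (f : ℝ → ℝ) (z₀ y₀ : ℝ) (hf : IsTwoTurnsLift f z₀ y₀)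
    (w₀ : ℝ) (hw₀ : w₀ = sSup {x ∈ Set.Icc z₀ (z₀ + 1) | f x = f z₀})
    (g : ℝ → ℝ)
    (hg₁ : ∀ x ∈ Set.Icc z₀ w₀, g x = f z₀)
    (hg₂ : ∀ x ∈ Set.Icc w₀ (z₀ + 1), g x = f x)
    (hg₃ : ∀ x : ℝ, g (x + 1) = g x + 1)
    (hgm : Monotone g) :
    Tendsto (fun n : ℕ => g^[n] 0 / (n : ℝ)) atTop (𝓝 (sSup (rotationSet f))) := by
  have hfc : Continuous f := hf.1.1
  obtain ⟨⟨hzw, hwz⟩, hfw⟩ : w₀ ∈ {x ∈ Set.Icc z₀ (z₀ + 1) | f x = f z₀} :=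
    hw₀ ▸ sSup_levelSet_mem hfc.continuousOn (by linarith [hf.2.1, hf.2.2.1])
  let F : ℝ →+c[1, 1] ℝ := ⟨f, hf.1.2⟩
  let G : CircleDeg1Lift := ⟨⟨g, hgm⟩, hg₃⟩
  have hτ : G.translationNumber ∈ rotationSet F :=
    translationNumber_mem_rotationSet F hfc G hzw hwz hfw hg₁
      fun x hx => map_eq_of_waterPouring F G hzw hg₁ hg₂ hx
  have hFG : ⇑F ≤ G :=
    map_le_of_waterPouring F G (fun x hx => hf.map_le_map_left hwz hfw hx) hg₁ hg₂
  have hle : ∀ r ∈ rotationSet F, r ≤ G.translationNumber := by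
    rintro r ⟨x, rfl⟩
    exact limsup_iterate_div_le_translationNumber G hFG (bddBelow_range_map_sub_id F hfc) x
  rw [show rotationSet f = rotationSet F from rfl, IsGreatest.csSup_eq ⟨hτ, hle⟩]
  have hG := G.tendsto_translation_number₀
  simp only [CircleDeg1Lift.coe_pow] at hG
  exact hG

theorem sup_rotation_set_eq_translation_number_of_water_pouring
    (f : ℝ → ℝ) (z₀ y₀ : ℝ) (hf : IsTwoTurnsLift f z₀ y₀)
    (w₀ : ℝ) (hw₀ : w₀ = sSup {x ∈ Set.Icc z₀ (z₀ + 1) | f x = f z₀})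
    (g : ℝ → ℝ)
    (hg₁ : ∀ x ∈ Set.Icc z₀ w₀, g x = f z₀)
    (hg₂ : ∀ x ∈ Set.Icc w₀ (z₀ + 1), g x = f x)
    (hg₃ : ∀ x : ℝ, g (x + 1) = g x + 1)
    (hgc : Continuous g) (hgm : Monotone g) :
    Tendsto (fun n : ℕ => g^[n] 0 / (n : ℝ)) atTop (𝓝 (sSup (rotationSet f))) :=
  sup_rotation_set_eq_translation_number_of_water_pouring_general f z₀ y₀ hf w₀ hw₀ g hg₁ hg₂ hg₃
    hgm
end
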